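/- arXiv:2504.06946 — 2 statements merged into one kernel-verified Lean document; each statement's English description precedes it below -/
import Mathlib

section
/- Let n ≥ 2 and let K ⊂ R^{n+1} be a smooth strictly convex body containing the origin in its interior. Suppose its radial position Z_K(x) = h_K(x)x + ∇h_K(x) satisfies Z_K(x) = A + B x / h_K(x) for all x ∈ S^n, for some fixed vector A ∈ R^{n+1} and matrix B. Then A = 0 and K is an origin-centered ellipsoid. -/
open MeasureTheory Real Finset
open scoped RealInnerProductSpace

noncomputable section

abbrev Euc (n : ℕ) : Type := EuclideanSpace ℝ (Fin (n + 1))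

section Aux

variable {n : ℕ} {K : Set (Euc n)} {H : Euc n → ℝ}

private lemma supp_max (hK : IsCompact K) (hne : K.Nonempty)
    (hsupp : ∀ y, H y = sSup ((fun z => ⟪z, y⟫) '' K)) (y : Euc n) :
    ∃ m ∈ K, H y = ⟪m, y⟫ ∧ ∀ z ∈ K, ⟪z, y⟫ ≤ ⟪m, y⟫ := by
  obtain ⟨m, hm, hmax⟩ := hK.exists_isMaxOn (f := fun z => (⟪z, y⟫ : ℝ)) hne
    ((continuous_id.inner continuous_const).continuousOn)
  refine ⟨m, hm, ?_, fun z hz => hmax hz⟩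
  rw [hsupp]
  exact IsGreatest.csSup_eq ⟨⟨m, hm, rfl⟩, by rintro w ⟨z, hz, rfl⟩; exact hmax hz⟩

private lemma supp_ub (hK : IsCompact K) (hne : K.Nonempty)
    (hsupp : ∀ y, H y = sSup ((fun z => ⟪z, y⟫) '' K)) {z : Euc n} (hz : z ∈ K) (y : Euc n) :
    ⟪z, y⟫ ≤ H y := by
  obtain ⟨m, hm, hHy, hmax⟩ := supp_max hK hne hsupp y
  rw [hHy]; exact hmax z hz

private lemma supp_hom (hK : IsCompact K) (hne : K.Nonempty)
    (hsupp : ∀ y, H y = sSup ((fun z => ⟪z, y⟫) '' K)) {c : ℝ} (hc : 0 ≤ c) (y : Euc n) :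
    H (c • y) = c * H y := by
  obtain ⟨m, hm, hHy, hmax⟩ := supp_max hK hne hsupp y
  obtain ⟨m', hm', hHy', hmax'⟩ := supp_max hK hne hsupp (c • y)
  apply le_antisymm
  · rw [hHy', hHy, real_inner_smul_right]
    exact mul_le_mul_of_nonneg_left (hmax m' hm') hc
  · calc c * H y = c * ⟪m, y⟫ := by rw [hHy]
    _ = ⟪m, c • y⟫ := (real_inner_smul_right m y c).symm
    _ ≤ ⟪m', c • y⟫ := hmax' m hm
    _ = H (c • y) := hHy'.symm

private lemma supp_zero (hK : IsCompact K) (hne : K.Nonempty)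
    (hsupp : ∀ y, H y = sSup ((fun z => ⟪z, y⟫) '' K)) : H 0 = 0 := by
  have := supp_hom hK hne hsupp (le_refl (0:ℝ)) (0 : Euc n)
  simpa using this

private lemma supp_pos (hK : IsCompact K) (hne : K.Nonempty) (h0 : (0 : Euc n) ∈ interior K)
    (hsupp : ∀ y, H y = sSup ((fun z => ⟪z, y⟫) '' K)) {y : Euc n} (hy : y ≠ 0) :
    0 < H y := by
  obtain ⟨ε, hε, hball⟩ := Metric.isOpen_iff.1 isOpen_interior 0 h0
  set z : Euc n := (ε / 2 * ‖y‖⁻¹) • y with hz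
  have hyn : 0 < ‖y‖ := norm_pos_iff.2 hy
  have hzK : z ∈ K := by
    apply interior_subset
    apply hball
    simp only [Metric.mem_ball, dist_zero_right, hz, norm_smul]
    rw [norm_mul, Real.norm_eq_abs, Real.norm_eq_abs, abs_of_pos (by positivity),
      abs_of_pos (by positivity), mul_assoc, inv_mul_cancel₀ (ne_of_gt hyn), mul_one]
    linarith
  have : ⟪z, y⟫ = ε / 2 * ‖y‖⁻¹ * (‖y‖ ^ 2) := by
    rw [hz, real_inner_smul_left, real_inner_self_eq_norm_sq]
  have hpos : (0:ℝ) < ⟪z, y⟫ := by rw [this]; positivity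
  exact lt_of_lt_of_le hpos (supp_ub hK hne hsupp hzK y)

end Aux

section Aux2

variable {n : ℕ} {H : Euc n → ℝ}

private lemma euler_lemma (hdiff : ∀ x : Euc n, x ≠ 0 → DifferentiableAt ℝ H x)
    (hom : ∀ c : ℝ, 0 ≤ c → ∀ y : Euc n, H (c • y) = c * H y) {x : Euc n} (hx : x ≠ 0) :
    fderiv ℝ H x x = H x := by
  have hsm : HasDerivAt (fun t : ℝ => t • x) ((1:ℝ) • x) 1 :=
    (hasDerivAt_id (1:ℝ)).smul_const x
  have h1 : HasDerivAt (fun t : ℝ => H (t • x)) (fderiv ℝ H x ((1:ℝ) • x)) 1 := by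
    have hf : HasFDerivAt H (fderiv ℝ H x) ((1:ℝ) • x) := by
      rw [one_smul]; exact (hdiff x hx).hasFDerivAt
    exact hf.comp_hasDerivAt 1 hsm
  have h2 : HasDerivAt (fun t : ℝ => H (t • x)) (H x) 1 := by
    have h2' : HasDerivAt (fun t : ℝ => t * H x) ((1:ℝ) * H x) 1 :=
      (hasDerivAt_id (1:ℝ)).mul_const (H x)
    rw [one_mul] at h2'
    apply h2'.congr_of_eventuallyEq
    filter_upwards [eventually_gt_nhds (show (0:ℝ) < 1 by norm_num)] with t ht
    rw [hom t ht.le x]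
  have := h1.unique h2
  rwa [one_smul] at this

private lemma grad_eq (hdiff : ∀ x : Euc n, x ≠ 0 → DifferentiableAt ℝ H x)
    {x : Euc n} (hx : x ≠ 0) (v : Euc n) : fderiv ℝ H x v = ⟪gradient H x, v⟫ := by
  have h := (hdiff x hx).hasGradientAt
  have h2 := hasGradientAt_iff_hasFDerivAt.1 h
  rw [h2.fderiv]
  simp [InnerProductSpace.toDual_apply_apply]

private lemma quad_identity {A : Euc n} {B : Euc n →ₗ[ℝ] Euc n}
    (hK0 : H 0 = 0)
    (hom : ∀ c : ℝ, 0 ≤ c → ∀ y : Euc n, H (c • y) = c * H y)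
    (hpos : ∀ y : Euc n, y ≠ 0 → 0 < H y)
    (hdiff : ∀ x : Euc n, x ≠ 0 → DifferentiableAt ℝ H x)
    (hrel : ∀ x ∈ Metric.sphere (0 : Euc n) 1,
      gradient H x = A + (H x)⁻¹ • B x) (x : Euc n) :
    H x ^ 2 = ⟪A, x⟫ * H x + ⟪B x, x⟫ := by
  -- first on the sphere
  have hsph : ∀ u : Euc n, ‖u‖ = 1 → H u ^ 2 = ⟪A, u⟫ * H u + ⟪B u, u⟫ := by
    intro u hu
    have hu0 : u ≠ 0 := by intro h; rw [h] at hu; simp at hu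
    have hH : 0 < H u := hpos u hu0
    set a := (⟪A, u⟫ : ℝ) with ha
    set b := (⟪B u, u⟫ : ℝ) with hb
    have he : H u = a + (H u)⁻¹ * b := by
      have h1 : fderiv ℝ H u u = H u := euler_lemma hdiff hom hu0
      calc H u = fderiv ℝ H u u := h1.symm
      _ = ⟪gradient H u, u⟫ := grad_eq hdiff hu0 u
      _ = a + (H u)⁻¹ * b := by
          rw [hrel u (by simpa [Metric.mem_sphere, dist_zero_right] using hu),
            inner_add_left, real_inner_smul_left]
    have hne := ne_of_gt hH
    field_simp at he
    rw [sq]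
    linarith [he]
  rcases eq_or_ne x 0 with rfl | hx0
  · simp [hK0]
  · set r := ‖x‖ with hr
    have hrpos : 0 < r := norm_pos_iff.2 hx0
    set u : Euc n := r⁻¹ • x with hu
    have hun : ‖u‖ = 1 := by
      rw [hu, norm_smul, norm_inv, norm_norm, inv_mul_cancel₀ (ne_of_gt hrpos)]
    have hxu : x = r • u := by rw [hu, smul_smul, mul_inv_cancel₀ (ne_of_gt hrpos), one_smul]
    have hHx : H x = r * H u := by rw [hxu, hom r hrpos.le]
    have hAx : ⟪A, x⟫ = r * ⟪A, u⟫ := by rw [hxu, real_inner_smul_right]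
    have hBx : ⟪B x, x⟫ = r ^ 2 * ⟪B u, u⟫ := by
      rw [hxu, B.map_smul, real_inner_smul_left, real_inner_smul_right]; ring
    rw [hHx, hAx, hBx]
    have := hsph u hun
    nlinarith [this]

end Aux2

section Aux3

variable {n : ℕ} {H : Euc n → ℝ} {A : Euc n} {B : Euc n →ₗ[ℝ] Euc n}

private lemma deriv_identity
    (hdiff : ∀ x : Euc n, x ≠ 0 → DifferentiableAt ℝ H x)
    (hquad : ∀ x : Euc n, H x ^ 2 = ⟪A, x⟫ * H x + ⟪B x, x⟫)
    {x : Euc n} (hx : x ≠ 0) (v : Euc n) :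
    2 * H x * fderiv ℝ H x v
      = ⟪A, v⟫ * H x + ⟪A, x⟫ * fderiv ℝ H x v + (⟪B x, v⟫ + ⟪B v, x⟫) := by
  set Bc : Euc n →L[ℝ] Euc n := LinearMap.toContinuousLinearMap B with hBc
  have hBcoe : ∀ y, Bc y = B y := fun y => rfl
  set G : Euc n → ℝ := fun y => H y * H y - (⟪A, y⟫ * H y + ⟪B y, y⟫) with hG
  have hG0 : G = fun _ => 0 := funext fun y => by
    have h := hquad y
    rw [sq] at h
    simp [hG, h]
  have hHd : HasFDerivAt H (fderiv ℝ H x) x := (hdiff x hx).hasFDerivAt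
  have hA : HasFDerivAt (fun y : Euc n => (⟪A, y⟫ : ℝ)) (innerSL ℝ A) x :=
    (innerSL ℝ A).hasFDerivAt
  have hB : HasFDerivAt (fun y : Euc n => (⟪B y, y⟫ : ℝ))
      ((fderivInnerCLM ℝ (Bc x, x)).comp (Bc.prod (ContinuousLinearMap.id ℝ (Euc n)))) x := by
    have := (Bc.hasFDerivAt (x := x)).inner ℝ (hasFDerivAt_id x)
    exact this
  have hGd : HasFDerivAt G
      ((H x • fderiv ℝ H x + H x • fderiv ℝ H x) -
        ((⟪A, x⟫ • fderiv ℝ H x + H x • (innerSL ℝ A)) +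
          (fderivInnerCLM ℝ (Bc x, x)).comp (Bc.prod (ContinuousLinearMap.id ℝ (Euc n))))) x :=
    (hHd.mul hHd).sub ((hA.mul hHd).add hB)
  have hGz : HasFDerivAt G (0 : Euc n →L[ℝ] ℝ) x := by
    rw [hG0]; exact hasFDerivAt_const 0 x
  have hEq := hGd.unique hGz
  have hv := ContinuousLinearMap.ext_iff.1 hEq v
  simp only [ContinuousLinearMap.sub_apply, ContinuousLinearMap.add_apply,
    ContinuousLinearMap.smul_apply, ContinuousLinearMap.comp_apply,
    ContinuousLinearMap.prod_apply, ContinuousLinearMap.coe_id', id_eq,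
    fderivInnerCLM_apply, innerSL_apply_apply, ContinuousLinearMap.zero_apply,
    smul_eq_mul, pow_one, Nat.cast_ofNat] at hv
  rw [hBcoe, hBcoe] at hv
  linarith [hv]

private lemma A_eq_zero (hn : 2 ≤ n)
    (hpos : ∀ y : Euc n, y ≠ 0 → 0 < H y)
    (hdiff : ∀ x : Euc n, x ≠ 0 → DifferentiableAt ℝ H x)
    (hquad : ∀ x : Euc n, H x ^ 2 = ⟪A, x⟫ * H x + ⟪B x, x⟫)
    (hrel : ∀ x ∈ Metric.sphere (0 : Euc n) 1,
      gradient H x = A + (H x)⁻¹ • B x) : A = 0 := by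
  by_contra hA0
  -- find a unit vector orthogonal to A
  obtain ⟨x, hxW, hx0⟩ : ∃ x : Euc n, x ∈ (ℝ ∙ A)ᗮ ∧ x ≠ 0 := by
    have hfr : Module.finrank ℝ (ℝ ∙ A) = 1 := finrank_span_singleton hA0
    have hsum := Submodule.finrank_add_finrank_orthogonal (K := (ℝ ∙ A)) (𝕜 := ℝ)
    rw [hfr, finrank_euclideanSpace_fin] at hsum
    have hpos' : 0 < Module.finrank ℝ ((ℝ ∙ A)ᗮ : Submodule ℝ (Euc n)) := by omega
    have hbot : ((ℝ ∙ A)ᗮ : Submodule ℝ (Euc n)) ≠ ⊥ := by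
      intro h
      rw [h, finrank_bot] at hpos'
      exact lt_irrefl 0 hpos'
    obtain ⟨x, hx, hx0⟩ := Submodule.exists_mem_ne_zero_of_ne_bot hbot
    exact ⟨x, hx, hx0⟩
  set u : Euc n := ‖x‖⁻¹ • x with hu
  have hxn : (0:ℝ) < ‖x‖ := norm_pos_iff.2 hx0
  have hun : ‖u‖ = 1 := by
    rw [hu, norm_smul, norm_inv, norm_norm, inv_mul_cancel₀ (ne_of_gt hxn)]
  have hu0 : u ≠ 0 := fun h => by rw [h] at hun; simp at hun
  have hAu : ⟪A, u⟫ = 0 := by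
    have := hxW A (Submodule.mem_span_singleton_self A)
    rw [hu, real_inner_smul_right, this, mul_zero]
  -- key identity at a unit vector w with ⟪A, w⟫ = 0
  have key : ∀ w : Euc n, ‖w‖ = 1 → ⟪A, w⟫ = 0 →
      ∀ v, H w * ⟪A, v⟫ + ⟪B w, v⟫ = ⟪B v, w⟫ := by
    intro w hw hAw v
    have hw0 : w ≠ 0 := fun h => by rw [h] at hw; simp at hw
    have hH : 0 < H w := hpos w hw0
    have hfd : fderiv ℝ H w v = ⟪A, v⟫ + (H w)⁻¹ * ⟪B w, v⟫ := by
      have h2 : fderiv ℝ H w v = ⟪gradient H w, v⟫ := by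
        have h := (hdiff w hw0).hasGradientAt
        have h2 := hasGradientAt_iff_hasFDerivAt.1 h
        rw [h2.fderiv]
        simp [InnerProductSpace.toDual_apply_apply]
      rw [h2, hrel w (by simpa [Metric.mem_sphere, dist_zero_right] using hw),
        inner_add_left, real_inner_smul_left]
    have hdi := deriv_identity hdiff hquad hw0 v
    rw [hfd, hAw] at hdi
    have hb : H w * ((H w)⁻¹ * ⟪B w, v⟫) = ⟪B w, v⟫ := by
      rw [← mul_assoc, mul_inv_cancel₀ (ne_of_gt hH), one_mul]
    linear_combination hdi - 2 * hb
  have k1 := key u hun hAu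
  have k2 := key (-u) (by rwa [norm_neg]) (by rw [inner_neg_right, hAu, neg_zero])
  have hsum : ∀ v, (H u + H (-u)) * ⟪A, v⟫ = 0 := by
    intro v
    have h1 := k1 v
    have h2 := k2 v
    rw [map_neg, inner_neg_left, inner_neg_right] at h2
    linear_combination h1 + h2
  have hposu := hpos u hu0
  have hposnu := hpos (-u) (by simpa using hu0)
  have : ∀ v : Euc n, ⟪A, v⟫ = 0 := by
    intro v
    have := hsum v
    have hne : H u + H (-u) ≠ 0 := by positivity
    exact (mul_eq_zero.1 this).resolve_left hne
  exact hA0 (inner_self_eq_zero.1 (this A))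

end Aux3

section Aux4
open Matrix

variable {n : ℕ}

-- bridge between inner product and dotProduct
private lemma inner_eq_dot (a b : Euc n) :
    ⟪a, b⟫ = dotProduct ((WithLp.equiv 2 _) a) ((WithLp.equiv 2 _) b) := by
  simp only [PiLp.inner_apply, RCLike.inner_apply, dotProduct]
  exact Finset.sum_congr rfl fun i _ => by simp [mul_comm]

private lemma ellipsoid_final {K : Set (Euc n)} {H : Euc n → ℝ} {B : Euc n →ₗ[ℝ] Euc n}
    (hK : IsCompact K) (hKconv : Convex ℝ K) (h0K : (0 : Euc n) ∈ K)
    (hub : ∀ z ∈ K, ∀ y, ⟪z, y⟫ ≤ H y)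
    (hsupp : ∀ y, H y = sSup ((fun z => ⟪z, y⟫) '' K))
    (hpos : ∀ y : Euc n, y ≠ 0 → 0 < H y)
    (hquad : ∀ x : Euc n, H x ^ 2 = ⟪B x, x⟫) :
    ∃ T : Euc n ≃ₗ[ℝ] Euc n, K = T '' Metric.closedBall (0 : Euc n) 1 := by
  classical
  set M : Matrix (Fin (n+1)) (Fin (n+1)) ℝ := Matrix.toEuclideanLin.symm B with hMdef
  have hM : Matrix.toEuclideanLin M = B := Matrix.toEuclideanLin.apply_symm_apply B
  set C : Matrix (Fin (n+1)) (Fin (n+1)) ℝ := (1/2 : ℝ) • (M + Mᵀ) with hCdef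
  -- quadratic form of C equals the quadratic form of B
  have hCq : ∀ a : Euc n, dotProduct ((WithLp.equiv 2 _) a) (C *ᵥ (WithLp.equiv 2 _) a)
      = ⟪B a, a⟫ := by
    intro a
    set x : Fin (n+1) → ℝ := (WithLp.equiv 2 _) a with hx
    have h1 : dotProduct x (Mᵀ *ᵥ x) = dotProduct x (M *ᵥ x) := by
      rw [Matrix.mulVec_transpose, Matrix.dotProduct_mulVec, dotProduct_comm]
    have h2 : dotProduct x (C *ᵥ x) = dotProduct x (M *ᵥ x) := by
      rw [hCdef, Matrix.smul_mulVec, Matrix.add_mulVec, dotProduct_smul,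
        dotProduct_add, h1, smul_eq_mul]
      ring
    rw [h2]
    have hBa : B a = Matrix.toEuclideanLin M a := by rw [hM]
    rw [hBa, inner_eq_dot, Matrix.toEuclideanLin_apply, WithLp.equiv_apply, WithLp.ofLp_toLp,
      dotProduct_comm]
    rfl
  have hCq' : ∀ a : Euc n, dotProduct ((WithLp.equiv 2 _) a) (C *ᵥ (WithLp.equiv 2 _) a)
      = H a ^ 2 := fun a => by rw [hCq a, ← hquad]
  -- C is positive semidefinite
  have hC : C.PosSemidef := by
    refine Matrix.posSemidef_iff_dotProduct_mulVec.mpr ⟨?_, ?_⟩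
    · have h1 : (M + Mᵀ).IsHermitian := by
        have := Matrix.isHermitian_add_transpose_self M
        rwa [Matrix.conjTranspose_eq_transpose_of_trivial] at this
      show Cᴴ = C
      rw [hCdef, Matrix.conjTranspose_smul, h1, star_trivial]
    · intro x
      have := hCq' ((WithLp.equiv 2 _).symm x)
      simp only [Equiv.apply_symm_apply] at this
      rw [star_trivial, this]
      positivity
  obtain ⟨R, hRsa, -, hRR⟩ : ∃ R : Matrix (Fin (n+1)) (Fin (n+1)) ℝ, IsSelfAdjoint R ∧
      QuasispectrumRestricts R ContinuousMap.realToNNReal ∧ R * R = C := by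
    open scoped MatrixOrder in
    exact CFC.exists_sqrt_of_isSelfAdjoint_of_quasispectrumRestricts hC.isHermitian
      (QuasispectrumRestricts.nnreal_of_nonneg hC.nonneg)
  have hRH : Rᴴ = R := hRsa
  set S : Euc n →ₗ[ℝ] Euc n := Matrix.toEuclideanLin R with hSdef
  have hadj : LinearMap.adjoint S = S := by
    have h1 : Matrix.toEuclideanLin Rᴴ = LinearMap.adjoint S :=
      Matrix.toEuclideanLin_conjTranspose_eq_adjoint R
    rw [hRH] at h1
    exact h1.symm
  have hSadj : ∀ a b : Euc n, ⟪S a, b⟫ = ⟪a, S b⟫ := by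
    intro a b
    conv_lhs => rw [← hadj]
    exact LinearMap.adjoint_inner_left S b a
  have hRT : Rᵀ = R := by
    rw [← Matrix.conjTranspose_eq_transpose_of_trivial, hRH]
  have hq : ∀ a : Euc n, ⟪S a, S a⟫ = H a ^ 2 := by
    intro a
    set x : Fin (n+1) → ℝ := (WithLp.equiv 2 _) a with hx
    have hSa : (WithLp.equiv 2 _) (S a) = R *ᵥ x := by
      rw [hSdef, Matrix.toEuclideanLin_apply, WithLp.equiv_apply, WithLp.ofLp_toLp]
      rfl
    rw [inner_eq_dot, hSa]
    have : (R *ᵥ x) ⬝ᵥ (R *ᵥ x) = x ⬝ᵥ (C *ᵥ x) := by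
      rw [Matrix.dotProduct_mulVec]
      have h1 : (R *ᵥ x) ᵥ* R = (R * R) *ᵥ x := by
        rw [← hRT, Matrix.vecMul_transpose, Matrix.mulVec_mulVec, hRT]
      rw [h1, hRR, dotProduct_comm]
    rw [this]
    exact hCq' a
  have hHnn : ∀ a : Euc n, 0 ≤ H a := by
    intro a
    have := hub 0 h0K a
    simpa using this
  have hHnorm : ∀ a : Euc n, H a = ‖S a‖ := by
    intro a
    have h1 : ‖S a‖ ^ 2 = H a ^ 2 := by
      rw [← real_inner_self_eq_norm_sq, hq a]
    calc H a = Real.sqrt (H a ^ 2) := (Real.sqrt_sq (hHnn a)).symm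
    _ = Real.sqrt (‖S a‖ ^ 2) := by rw [h1]
    _ = ‖S a‖ := Real.sqrt_sq (norm_nonneg _)
  have hinj : Function.Injective S := by
    rw [← LinearMap.ker_eq_bot, LinearMap.ker_eq_bot']
    intro a ha
    by_contra ha0
    have := hpos a ha0
    rw [hHnorm a, ha] at this
    simp at this
  set T : Euc n ≃ₗ[ℝ] Euc n :=
    LinearEquiv.ofBijective S ⟨hinj, LinearMap.injective_iff_surjective.1 hinj⟩ with hTdef
  have hTS : ∀ a, T a = S a := fun a => rfl
  refine ⟨T, ?_⟩
  apply Set.eq_of_subset_of_subset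
  · -- K ⊆ T '' ball
    intro z hz
    set u : Euc n := T.symm z with hudef
    have hSu : S u = z := by rw [← hTS]; exact T.apply_symm_apply z
    refine ⟨u, ?_, hSu⟩
    rw [Metric.mem_closedBall, dist_zero_right]
    rcases eq_or_ne u 0 with h | h
    · rw [h]; simp
    · set y : Euc n := T.symm u with hydef
      have hSy : S y = u := by rw [← hTS]; exact T.apply_symm_apply u
      have h1 : ⟪u, u⟫ = ⟪z, y⟫ := by
        calc ⟪u, u⟫ = ⟪S y, u⟫ := by rw [hSy]
        _ = ⟪y, S u⟫ := hSadj y u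
        _ = ⟪y, z⟫ := by rw [hSu]
        _ = ⟪z, y⟫ := real_inner_comm z y
      have h2 : ⟪z, y⟫ ≤ H y := hub z hz y
      have h3 : H y = ‖u‖ := by rw [hHnorm y, hSy]
      have h4 : ‖u‖ ^ 2 ≤ ‖u‖ := by
        rw [← real_inner_self_eq_norm_sq, h1, ← h3]; exact h2
      nlinarith [norm_nonneg u, h4]
  · -- T '' ball ⊆ K
    rintro z ⟨u, hu, rfl⟩
    rw [Metric.mem_closedBall, dist_zero_right] at hu
    rw [hTS]
    by_contra hzK
    obtain ⟨f, u0, hfa, hfz⟩ :=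
      geometric_hahn_banach_closed_point hKconv hK.isClosed hzK
    set y : Euc n := (InnerProductSpace.toDual ℝ (Euc n)).symm f with hydef
    have hyf : ∀ a : Euc n, ⟪y, a⟫ = f a := fun a =>
      InnerProductSpace.toDual_symm_apply
    have hHy : H y ≤ u0 := by
      rw [hsupp]
      apply csSup_le (Set.Nonempty.image _ ⟨0, h0K⟩)
      rintro w ⟨a, haK, rfl⟩
      show ⟪a, y⟫ ≤ u0
      rw [real_inner_comm, hyf a]
      exact le_of_lt (hfa a haK)
    have hle : ⟪y, S u⟫ ≤ H y := by
      have h1 : ⟪y, S u⟫ = ⟪S y, u⟫ := by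
        rw [real_inner_comm, hSadj u y, real_inner_comm]
      rw [h1]
      calc ⟪S y, u⟫ ≤ ‖S y‖ * ‖u‖ := real_inner_le_norm _ _
      _ ≤ ‖S y‖ * 1 := mul_le_mul_of_nonneg_left hu (norm_nonneg _)
      _ = H y := by rw [mul_one, hHnorm y]
    have : f (S u) ≤ u0 := by
      rw [← hyf (S u)]
      exact le_trans hle hHy
    linarith [hfz]

end Aux4


/-- Let `K ⊂ ℝ^{n+1}` (n ≥ 2) be a smooth strictly convex body with
`0` in its interior, with support function `h_K` (1-homogeneous extension `H`), so that
its radial position is `Z_K(x) = ∇H(x)`. If `Z_K(x) = A + B x / h_K(x)` on `S^n` for a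
fixed vector `A` and a fixed linear map `B`, then `A = 0` and `K` is an origin-centered
ellipsoid. -/
theorem radial_affine_implies_ellipsoid (n : ℕ) (hn : 2 ≤ n) (K : Set (Euc n))
    (H : Euc n → ℝ) (A : Euc n) (B : Euc n →ₗ[ℝ] Euc n)
    (hK : IsCompact K) (hKconv : Convex ℝ K) (h0 : (0 : Euc n) ∈ interior K)
    (hsupp : ∀ y, H y = sSup ((fun z => ⟪z, y⟫) '' K))
    (hsmooth : ContDiffOn ℝ (⊤ : ℕ∞) H {(0 : Euc n)}ᶜ)
    (hrel : ∀ x ∈ Metric.sphere (0 : Euc n) 1,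
      gradient H x = A + (H x)⁻¹ • B x) :
    A = 0 ∧ ∃ T : Euc n ≃ₗ[ℝ] Euc n, K = T '' Metric.closedBall (0 : Euc n) 1 := by
  have h0K : (0 : Euc n) ∈ K := interior_subset h0
  have hne : K.Nonempty := ⟨0, h0K⟩
  have hdiff : ∀ x : Euc n, x ≠ 0 → DifferentiableAt ℝ H x := by
    intro x hx
    have hxmem : x ∈ ({(0 : Euc n)}ᶜ : Set (Euc n)) := hx
    exact (hsmooth.differentiableOn (by simp)).differentiableAt
      (isOpen_compl_singleton.mem_nhds hxmem)
  have hom : ∀ c : ℝ, 0 ≤ c → ∀ y : Euc n, H (c • y) = c * H y :=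
    fun c hc y => supp_hom hK hne hsupp hc y
  have hposH : ∀ y : Euc n, y ≠ 0 → 0 < H y := fun y hy => supp_pos hK hne h0 hsupp hy
  have hzero : H 0 = 0 := supp_zero hK hne hsupp
  have hquad : ∀ x : Euc n, H x ^ 2 = ⟪A, x⟫ * H x + ⟪B x, x⟫ :=
    quad_identity hzero hom hposH hdiff hrel
  have hA : A = 0 := A_eq_zero hn hposH hdiff hquad hrel
  have hquad0 : ∀ x : Euc n, H x ^ 2 = ⟪B x, x⟫ := by
    intro x
    have := hquad x
    rwa [hA, inner_zero_left, zero_mul, zero_add] at this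
  exact ⟨hA, ellipsoid_final hK hKconv h0K (fun z hz y => supp_ub hK hne hsupp hz y)
    hsupp hposH hquad0⟩

end
end

section
/- Let p < -2 and μ_1 ≤ μ_2 be positive reals, and t ≥ 0. Then ∫_{S^1} (t + μ_1² x_1² + μ_2² x_2²)^{p/2} dθ ≥ c_p 2^p (t+μ_1²)^{(p+2)/2} / sqrt((t+μ_1²)(t+μ_2²)) for a positive constant c_p depending only on p (in fact one can take a constant uniform for p in compact subsets of (-∞,-2)). -/
/-!
With `A = t + μ₁²` and `B = t + μ₂²` the integrand is `(A + (B - A) sin²θ)^{p/2}`.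
On `[0, √(A/B)]` we have `sin²θ ≤ θ² ≤ A/B`, so the base is at most `2A` and, since `p ≤ 0`,
the integrand is at least `(2A)^{p/2}`. Keeping only this interval bounds the integral below by
`√(A/B) (2A)^{p/2}`, which is the claimed bound with `c = 2^{-p/2}`.
-/

open MeasureTheory Real intervalIntegral

theorem mul_le_intervalIntegral_of_le_on_Icc {f : ℝ → ℝ} {a b c m : ℝ} (hab : a ≤ b)
    (hbc : b ≤ c) (hf : IntervalIntegrable f volume a c) (hf₀ : ∀ x ∈ Set.Icc a c, 0 ≤ f x)
    (hm : ∀ x ∈ Set.Icc a b, m ≤ f x) :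
    (b - a) * m ≤ ∫ x in a..c, f x := by
  calc (b - a) * m = ∫ _ in a..b, m := by simp
    _ ≤ ∫ x in a..b, f x :=
      integral_mono_on hab intervalIntegrable_const
        (hf.mono_set (Set.uIcc_subset_uIcc_left (Set.mem_uIcc_of_le hab hbc))) hm
    _ ≤ ∫ x in a..c, f x :=
      integral_mono_interval le_rfl hab hbc
        (ae_restrict_of_forall_mem measurableSet_Ioc fun x hx => hf₀ x (Set.Ioc_subset_Icc_self hx))
        hf

theorem add_sub_mul_le_two_mul {A B s : ℝ} (hA : 0 ≤ A) (hAB : A ≤ B) (hs : s ≤ A / B) :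
    A + (B - A) * s ≤ 2 * A := by
  have : (B - A) * (A / B) ≤ A := by
    rcases hAB.lt_or_eq with h | rfl
    · rw [mul_div_assoc', div_le_iff₀ (hA.trans_lt h)]
      nlinarith
    · simpa using hA
  nlinarith [mul_le_mul_of_nonneg_left hs (sub_nonneg.2 hAB)]

theorem add_sub_mul_sin_sq_pos {A B : ℝ} (hA : 0 < A) (hAB : A ≤ B) (θ : ℝ) :
    0 < A + (B - A) * sin θ ^ 2 :=
  add_pos_of_pos_of_nonneg hA (mul_nonneg (sub_nonneg.2 hAB) (sq_nonneg _))

theorem two_mul_rpow_le_add_sub_mul_sin_sq_rpow {A B p θ : ℝ} (hA : 0 < A) (hAB : A ≤ B)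
    (hp : p ≤ 0) (hθ : θ ∈ Set.Icc 0 √(A / B)) :
    (2 * A) ^ p ≤ (A + (B - A) * sin θ ^ 2) ^ p := by
  have hθ2 : θ ^ 2 ≤ A / B := (Real.le_sqrt hθ.1 (div_nonneg hA.le (hA.le.trans hAB))).1 hθ.2
  exact rpow_le_rpow_of_nonpos (add_sub_mul_sin_sq_pos hA hAB θ)
    (add_sub_mul_le_two_mul hA.le hAB (sin_sq_le_sq.trans hθ2)) hp

theorem two_rpow_mul_rpow_div_sqrt_eq {A : ℝ} (B p : ℝ) (hA : 0 < A) :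
    2 ^ (-(p / 2)) * 2 ^ p * A ^ ((p + 2) / 2) / √(A * B) = √(A / B) * (2 * A) ^ (p / 2) := by
  rw [← rpow_add two_pos, show -(p / 2) + p = p / 2 by ring, mul_rpow zero_le_two hA.le,
    show (p + 2) / 2 = p / 2 + 1 by ring, rpow_add hA, rpow_one, sqrt_div hA.le, sqrt_mul hA.le]
  field_simp
  rw [sq_sqrt hA.le]

/-- For `p < -2` there is `c_p > 0` such that for all
`0 < μ₁ ≤ μ₂` and `t ≥ 0`,
`∫_{S^1} (t + μ₁² x₁² + μ₂² x₂²)^{p/2} ≥ c_p 2^p (t+μ₁²)^{(p+2)/2}/√((t+μ₁²)(t+μ₂²))`,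
where `S^1` is parametrized by `(x₁,x₂) = (cos θ, sin θ)`. -/
theorem planar_ellipsoid_integral_lower_bound (p : ℝ) (hp : p < -2) :
    ∃ c : ℝ, 0 < c ∧
      ∀ t μ₁ μ₂ : ℝ, 0 ≤ t → 0 < μ₁ → μ₁ ≤ μ₂ →
        (∫ θ in (0 : ℝ)..(2 * π),
            (t + μ₁ ^ 2 * Real.cos θ ^ 2 + μ₂ ^ 2 * Real.sin θ ^ 2) ^ (p / 2))
          ≥ c * 2 ^ p * (t + μ₁ ^ 2) ^ ((p + 2) / 2) /
              Real.sqrt ((t + μ₁ ^ 2) * (t + μ₂ ^ 2)) := by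
  refine ⟨2 ^ (-(p / 2)), by positivity, fun t μ₁ μ₂ ht hμ₁ hμ => ?_⟩
  set A := t + μ₁ ^ 2
  set B := t + μ₂ ^ 2
  have hA : 0 < A := by positivity
  have hAB : A ≤ B := add_le_add_right (pow_le_pow_left₀ hμ₁.le hμ 2) t
  have hform : ∀ θ, t + μ₁ ^ 2 * cos θ ^ 2 + μ₂ ^ 2 * sin θ ^ 2 = A + (B - A) * sin θ ^ 2 :=
    fun θ => by rw [cos_sq']; ring
  have hr : √(A / B) ≤ 2 * π := by
    have : √(A / B) ≤ 1 := sqrt_le_one.2 (div_le_one_of_le₀ hAB (hA.le.trans hAB))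
    linarith [pi_gt_three]
  simp only [hform]
  rw [ge_iff_le, two_rpow_mul_rpow_div_sqrt_eq B p hA, ← sub_zero √(A / B)]
  refine mul_le_intervalIntegral_of_le_on_Icc (sqrt_nonneg _) hr ?_
    (fun θ _ => (rpow_pos_of_pos (add_sub_mul_sin_sq_pos hA hAB θ) _).le)
    (fun θ hθ => two_mul_rpow_le_add_sub_mul_sin_sq_rpow hA hAB (by linarith) hθ)
  exact (Continuous.rpow_const (by fun_prop) fun θ =>
    Or.inl (add_sub_mul_sin_sq_pos hA hAB θ).ne').intervalIntegrable _ _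
end
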